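/- Let H be a Hopf algebra over a field k and R a commutative k-algebra. A linear map σ : H ⊗ H → R is lazy, i.e. σ(x₁ ⊗ y₁) ⊗ x₂y₂ = σ(x₂ ⊗ y₂) ⊗ x₁y₁ in R ⊗ H for all x, y ∈ H, if and only if σ vanishes on the subspace I₂(H). -/

import Mathlib

open TensorProduct

/-- `I₂(H)`: the subspace of `H ⊗ H` spanned by the elements
`φ(x₂y₂)·(x₁ ⊗ y₁) − φ(x₁y₁)·(x₂ ⊗ y₂)` for `x, y ∈ H` and linear forms
`φ : H → k`, where `H ⊗ H` carries the tensor-product coalgebra structure. -/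
noncomputable def lazySubspace2 (k : Type*) [Field k] (H : Type*)
    [Ring H] [HopfAlgebra k H] : Submodule k (H ⊗[k] H) :=
  Submodule.span k {z : H ⊗[k] H | ∃ (x y : H) (φ : H →ₗ[k] k),
    z = (TensorProduct.rid k (H ⊗[k] H))
          (TensorProduct.map
            (LinearMap.id : H ⊗[k] H →ₗ[k] H ⊗[k] H)
            (φ ∘ₗ LinearMap.mul' k H)
            (Coalgebra.comul (R := k) (x ⊗ₜ[k] y)))
      - (TensorProduct.lid k (H ⊗[k] H))
          (TensorProduct.map
            (φ ∘ₗ LinearMap.mul' k H)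
            (LinearMap.id : H ⊗[k] H →ₗ[k] H ⊗[k] H)
            (Coalgebra.comul (R := k) (x ⊗ₜ[k] y)))}

/-!
Applying `σ` to the generator of `I₂(H)` indexed by `x, y, φ` gives the image, under
`id ⊗ φ : R ⊗ H → R`, of the laziness defect
`σ(x₁ ⊗ y₁) ⊗ x₂y₂ − σ(x₂ ⊗ y₂) ⊗ x₁y₁`.
As `H` is free over `k`, the maps `id ⊗ φ` jointly detect zero in `R ⊗ H`, so `σ` kills
`I₂(H)` exactly when every defect vanishes.
-/

theorem TensorProduct.eq_zero_of_forall_rid_lTensor_eq_zero {k M N : Type*} [CommSemiring k]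
    [AddCommMonoid M] [Module k M] [AddCommMonoid N] [Module k N] [Module.Free k N]
    {t : M ⊗[k] N}
    (h : ∀ φ : Module.Dual k N, TensorProduct.rid k M (φ.lTensor M t) = 0) : t = 0 := by
  classical
  apply (equivFinsuppOfBasisRight (Module.Free.chooseBasis k N)).injective
  ext i
  rw [equivFinsuppOfBasisRight_apply, h, map_zero, Finsupp.zero_apply]

theorem TensorProduct.map_rid_map_id_sub_lid_map_id {k M P Q : Type*} [CommSemiring k]
    [AddCommGroup M] [Module k M] [AddCommGroup P] [Module k P] [AddCommMonoid Q] [Module k Q]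
    (σ : M →ₗ[k] P) (g : M →ₗ[k] Q) (φ : Q →ₗ[k] k) (t : M ⊗[k] M) :
    σ (TensorProduct.rid k M (map LinearMap.id (φ ∘ₗ g) t)
        - TensorProduct.lid k M (map (φ ∘ₗ g) LinearMap.id t)) =
      TensorProduct.rid k P (φ.lTensor P (map σ g t - map σ g (TensorProduct.comm k M M t))) := by
  induction t using TensorProduct.induction_on with
  | zero => simp
  | tmul m n => simp
  | add t t' ht ht' =>
    simp only [map_add, map_sub, add_sub_add_comm] at ht ht' ⊢
    rw [ht, ht']

/-- a linear map `σ : H ⊗ H → R` is lazy, i.e.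
`σ(x₁ ⊗ y₁) ⊗ x₂y₂ = σ(x₂ ⊗ y₂) ⊗ x₁y₁` in `R ⊗ H` for all `x, y ∈ H`,
if and only if `σ` vanishes on `I₂(H)`. -/
theorem lazy2_iff_vanishes_on_lazySubspace2 (k : Type*) [Field k] (H : Type*)
    [Ring H] [HopfAlgebra k H] (R : Type*) [CommRing R] [Algebra k R]
    (σ : H ⊗[k] H →ₗ[k] R) :
    (∀ x y : H,
      TensorProduct.map σ (LinearMap.mul' k H)
          (Coalgebra.comul (R := k) (x ⊗ₜ[k] y))
        = TensorProduct.map σ (LinearMap.mul' k H)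
            ((TensorProduct.comm k (H ⊗[k] H) (H ⊗[k] H))
              (Coalgebra.comul (R := k) (x ⊗ₜ[k] y))))
    ↔ ∀ z ∈ lazySubspace2 k H, σ z = 0 := by
  constructor
  · intro hlazy z hz
    show z ∈ LinearMap.ker σ
    refine Submodule.span_le.2 ?_ hz
    rintro _ ⟨x, y, φ, rfl⟩
    rw [SetLike.mem_coe, LinearMap.mem_ker, TensorProduct.map_rid_map_id_sub_lid_map_id,
      hlazy, sub_self, map_zero, map_zero]
  · intro hvan x y
    rw [← sub_eq_zero]
    refine TensorProduct.eq_zero_of_forall_rid_lTensor_eq_zero fun φ => ?_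
    rw [← TensorProduct.map_rid_map_id_sub_lid_map_id]
    exact hvan _ (Submodule.subset_span ⟨x, y, φ, rfl⟩)
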